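/- arXiv:0910.5396 — 2 statements merged into one kernel-verified Lean document; each statement's English description precedes it below -/
import Mathlib

section
/- If B(X) contains a cycle of length greater than 4, then each of Δ(X) and Γ(X) contains a cycle. -/
open SimpleGraph

/-- The set of primes dividing at least one element of `X`. -/
def rho (X : Set ℕ) : Set ℕ := {p | p.Prime ∧ ∃ x ∈ X, p ∣ x}

/-- `X* = X \ {1}`. -/
def Xstar (X : Set ℕ) : Set ℕ := X \ {1}

/-- The bipartite divisor graph `B(X)` on the disjoint union `ρ(X) ⊔ X*`:
`p ∈ ρ(X)` and `x ∈ X*` are adjacent iff `p ∣ x`. -/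
def BGraph (X : Set ℕ) : SimpleGraph (↥(rho X) ⊕ ↥(Xstar X)) where
  Adj u v :=
    match u, v with
    | Sum.inl p, Sum.inr x => (p : ℕ) ∣ (x : ℕ)
    | Sum.inr x, Sum.inl p => (p : ℕ) ∣ (x : ℕ)
    | _, _ => False
  symm := by constructor; rintro (p | x) (q | y) h <;> exact h
  loopless := by constructor; rintro (p | x) h <;> exact h

/-- The prime vertex graph `Δ(X)` on `ρ(X)`: distinct primes `p, q` are
adjacent iff `p*q` divides some element of `X`. -/
def DeltaGraph (X : Set ℕ) : SimpleGraph ↥(rho X) where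
  Adj p q := p ≠ q ∧ ∃ x ∈ X, (p : ℕ) * (q : ℕ) ∣ x
  symm := by
    constructor; rintro p q ⟨hne, x, hx, hdvd⟩
    exact ⟨hne.symm, x, hx, by rwa [mul_comm]⟩
  loopless := by constructor; rintro p ⟨hne, -⟩; exact hne rfl

/-- The common divisor graph `Γ(X)` on `X*`: distinct `x, y` are adjacent
iff `gcd(x, y) > 1`. -/
def GammaGraph (X : Set ℕ) : SimpleGraph ↥(Xstar X) where
  Adj x y := x ≠ y ∧ 1 < Nat.gcd (x : ℕ) (y : ℕ)
  symm := by
    constructor; rintro x y ⟨hne, h⟩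
    exact ⟨hne.symm, by rwa [Nat.gcd_comm]⟩
  loopless := by constructor; rintro x ⟨hne, -⟩; exact hne rfl

/-
A cycle of `B(X)` alternates between primes and elements of `X*`. Contracting each stretch
`p – x – q` to the edge `p – q` (here `pq ∣ x`) gives a closed walk in `Δ(X)` of half the length;
contracting each stretch `x – p – y` to `x – y` (here `p ∣ gcd x y`) does the same in `Γ(X)`.
The contracted walk visits distinct vertices because the cycle does, and it has length at
least 3 because the cycle has length more than 4.
-/

namespace SimpleGraph.Walk

variable {V α β : Type*} {H : SimpleGraph (α ⊕ β)} {G : SimpleGraph α}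

theorem isCycle_of_support_tail_nodup {K : SimpleGraph V} {v : V} {c : K.Walk v v}
    (hlen : 3 ≤ c.length) (hnodup : c.support.tail.Nodup) : c.IsCycle := by
  have hnil : ¬ c.Nil := by rw [← length_eq_zero_iff]; omega
  exact isCycle_iff_isPath_tail_and_le_length.mpr
    ⟨.mk' (by rwa [support_tail_of_not_nil c hnil]), hlen⟩

theorem exists_inl_mem_support (hH : ∀ ⦃u v⦄, H.Adj u v → u.isLeft ≠ v.isLeft) {v : α ⊕ β}
    {c : H.Walk v v} (hc : ¬ c.Nil) : ∃ a, Sum.inl a ∈ c.support := by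
  rcases v with a | b
  · exact ⟨a, c.start_mem_support⟩
  · rcases hsnd : c.snd with a | b'
    · exact ⟨a, hsnd ▸ c.getVert_mem_support 1⟩
    · have hadj := c.adj_snd hc
      rw [hsnd] at hadj
      exact (hH hadj rfl).elim

theorem IsTrail.exists_walk_support_eq_filterMap_getLeft
    (hH : ∀ ⦃u v⦄, H.Adj u v → u.isLeft ≠ v.isLeft)
    (hG : ∀ ⦃a a' b⦄, a ≠ a' → H.Adj (.inl a) (.inr b) → H.Adj (.inr b) (.inl a') → G.Adj a a') :
    ∀ {a a' : α} {w : H.Walk (.inl a) (.inl a')}, w.IsTrail →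
      ∃ d : G.Walk a a', 2 * d.length = w.length ∧ d.support = w.support.filterMap Sum.getLeft?
  | _, _, .nil, _ => ⟨.nil, rfl, rfl⟩
  | _, _, .cons (v := .inl _) h _, _ => (hH h rfl).elim
  | _, _, .cons (v := .inr _) h (.cons (v := .inr _) h' _), _ => (hH h' rfl).elim
  | a, _, .cons (v := .inr b) h (.cons (v := .inl a'') h' w), ht => by
    -- a trail does not traverse the edge `s(inl a, inr b)` twice
    have hne : a ≠ a'' := by
      rintro rfl
      simp at ht
    obtain ⟨d, hlen, hsupp⟩ :=
      IsTrail.exists_walk_support_eq_filterMap_getLeft hH hG ht.of_cons.of_cons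
    exact ⟨.cons (hG hne h h') d, by simp only [length_cons]; omega,
      by simp [hsupp, List.filterMap_cons]⟩

theorem IsCycle.exists_isCycle_left_of_four_lt_length [DecidableEq α] [DecidableEq β]
    (hH : ∀ ⦃u v⦄, H.Adj u v → u.isLeft ≠ v.isLeft)
    (hG : ∀ ⦃a a' b⦄, a ≠ a' → H.Adj (.inl a) (.inr b) → H.Adj (.inr b) (.inl a') → G.Adj a a')
    {v : α ⊕ β} {c : H.Walk v v} (hc : c.IsCycle) (hlen : 4 < c.length) :
    ∃ (a : α) (d : G.Walk a a), d.IsCycle := by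
  obtain ⟨a, ha⟩ := exists_inl_mem_support hH hc.not_nil
  have hc' := hc.rotate ha
  obtain ⟨d, hdlen, hsupp⟩ := hc'.isTrail.exists_walk_support_eq_filterMap_getLeft hH hG
  refine ⟨a, d, isCycle_of_support_tail_nodup (by simp at hdlen; omega) ?_⟩
  have htail : d.support.tail = (c.rotate _ ha).support.tail.filterMap Sum.getLeft? := by
    rw [hsupp, ← cons_tail_support]
    simp only [List.filterMap_cons, Sum.getLeft?_inl, List.tail_cons]
  rw [htail]
  exact hc'.support_nodup.filterMap fun _ _ _ h h' ↦
    (Sum.getLeft?_eq_some_iff.mp h).trans (Sum.getLeft?_eq_some_iff.mp h').symm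

theorem IsCycle.exists_isCycle_right_of_four_lt_length [DecidableEq α] [DecidableEq β]
    {G' : SimpleGraph β} (hH : ∀ ⦃u v⦄, H.Adj u v → u.isLeft ≠ v.isLeft)
    (hG' : ∀ ⦃b b' a⦄, b ≠ b' → H.Adj (.inr b) (.inl a) → H.Adj (.inl a) (.inr b') → G'.Adj b b')
    {v : α ⊕ β} {c : H.Walk v v} (hc : c.IsCycle) (hlen : 4 < c.length) :
    ∃ (b : β) (d : G'.Walk b b), d.IsCycle := by
  let e := Iso.map (Equiv.sumComm α β) H
  refine (hc.map (f := e.toHom) e.injective).exists_isCycle_left_of_four_lt_length ?_ ?_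
    (by simpa using hlen)
  · rintro _ _ ⟨-, u, v, huv, rfl, rfl⟩
    have := hH huv
    rcases u with _ | _ <;> rcases v with _ | _ <;> simp_all
  · intro b b' a hne h h'
    exact hG' hne ((e.map_adj_iff (v := .inr b) (w := .inl a)).mp h)
      ((e.map_adj_iff (v := .inl a) (w := .inr b')).mp h')

end SimpleGraph.Walk

theorem BGraph.isLeft_ne_of_adj {X : Set ℕ} {u v : ↥(rho X) ⊕ ↥(Xstar X)}
    (h : (BGraph X).Adj u v) : u.isLeft ≠ v.isLeft := by
  rcases u with _ | _ <;> rcases v with _ | _ <;> simp_all [BGraph]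

theorem DeltaGraph.adj_of_dvd {X : Set ℕ} {p q : ↥(rho X)} {x : ↥(Xstar X)} (hpq : p ≠ q)
    (hp : (p : ℕ) ∣ x) (hq : (q : ℕ) ∣ x) : (DeltaGraph X).Adj p q := by
  have hcop : Nat.Coprime p q := (Nat.coprime_primes p.2.1 q.2.1).mpr (Subtype.coe_ne_coe.mpr hpq)
  exact ⟨hpq, x, x.2.1, hcop.mul_dvd_of_dvd_of_dvd hp hq⟩

theorem GammaGraph.adj_of_dvd {X : Set ℕ} {x y : ↥(Xstar X)} {p : ↥(rho X)} (hxy : x ≠ y)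
    (hx : (p : ℕ) ∣ x) (hy : (p : ℕ) ∣ y) : (GammaGraph X).Adj x y := by
  have hgcd : Nat.gcd x y ≠ 0 := by
    rw [Ne, Nat.gcd_eq_zero_iff]
    exact fun h ↦ hxy (Subtype.ext (h.1.trans h.2.symm))
  exact ⟨hxy, p.2.1.one_lt.trans_le (Nat.le_of_dvd (Nat.pos_of_ne_zero hgcd) (Nat.dvd_gcd hx hy))⟩

theorem stmt_6_general (X : Set ℕ)
    (hcyc : ∃ (v : ↥(rho X) ⊕ ↥(Xstar X)) (w : (BGraph X).Walk v v),
      w.IsCycle ∧ 4 < w.length) :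
    (∃ (p : ↥(rho X)) (c : (DeltaGraph X).Walk p p), c.IsCycle) ∧
    (∃ (x : ↥(Xstar X)) (c : (GammaGraph X).Walk x x), c.IsCycle) := by
  classical
  obtain ⟨v, w, hw, hlen⟩ := hcyc
  exact ⟨hw.exists_isCycle_left_of_four_lt_length (fun _ _ ↦ BGraph.isLeft_ne_of_adj)
      (fun _ _ _ hne hp hq ↦ DeltaGraph.adj_of_dvd hne hp hq) hlen,
    hw.exists_isCycle_right_of_four_lt_length (fun _ _ ↦ BGraph.isLeft_ne_of_adj)
      (fun _ _ _ hne hx hy ↦ GammaGraph.adj_of_dvd hne hx hy) hlen⟩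

theorem stmt_6 (X : Set ℕ) (hne : X.Nonempty) (hpos : ∀ x ∈ X, 0 < x)
    (hX1 : X ≠ {1})
    (hcyc : ∃ (v : ↥(rho X) ⊕ ↥(Xstar X)) (w : (BGraph X).Walk v v),
      w.IsCycle ∧ 4 < w.length) :
    (∃ (p : ↥(rho X)) (c : (DeltaGraph X).Walk p p), c.IsCycle) ∧
    (∃ (x : ↥(Xstar X)) (c : (GammaGraph X).Walk x x), c.IsCycle) :=
  stmt_6_general X hcyc
end

section
/- At least one of the graphs Δ(X), Γ(X) contains a triangle (a complete subgraph on 3 vertices) if and only if B(X) contains an induced subgraph isomorphic to the 6-cycle C6 or an induced subgraph isomorphic to the complete bipartite graph K_{1,3}. -/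
open SimpleGraph

/-! `Δ(X)` and `Γ(X)` are the graphs "having a common neighbour in `B(X)`" on the two sides of
`B(X)` (for `Δ(X)` because two distinct primes dividing `x` have their product dividing `x`).
So the statement holds for the bipartite graph of any relation `r : α → β → Prop`, and swapping
the two sides reduces everything to triangles among the `α`-vertices. Such a triangle `a, b, c`
with common neighbours `x` of `a, b`, `y` of `b, c` and `z` of `a, c` is an induced hexagon
`a x b y c z` unless one of `x, y, z` is adjacent to all of `a, b, c`, which is then the centre
of an induced `K_{1,3}`. Conversely, the vertices `0, 2, 4` of an induced `C₆`, and the leaves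
of an induced `K_{1,3}`, form a triangle of common neighbours on their side. -/

open Sum

namespace SimpleGraph

variable {α β : Type*} (r : α → β → Prop)

def bipartiteOfRel : SimpleGraph (α ⊕ β) where
  Adj u v :=
    match u, v with
    | inl a, inr b => r a b
    | inr b, inl a => r a b
    | _, _ => False
  symm := by constructor; rintro (a | b) (a' | b') h <;> exact h
  loopless := by constructor; rintro (a | b) h <;> exact h

def sharedNeighborGraph : SimpleGraph α where
  Adj a a' := a ≠ a' ∧ ∃ b, r a b ∧ r a' b
  symm := by
    constructor; rintro a a' ⟨hne, b, ha, ha'⟩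
    exact ⟨hne.symm, b, ha', ha⟩
  loopless := by constructor; rintro a ⟨hne, -⟩; exact hne rfl

def HasTriangle {V : Type*} (G : SimpleGraph V) : Prop :=
  ∃ u v w, G.Adj u v ∧ G.Adj v w ∧ G.Adj u w

variable {r}

@[simp] lemma bipartiteOfRel_adj_inl_inr {a : α} {b : β} :
    (bipartiteOfRel r).Adj (inl a) (inr b) ↔ r a b := Iff.rfl

@[simp] lemma bipartiteOfRel_adj_inr_inl {a : α} {b : β} :
    (bipartiteOfRel r).Adj (inr b) (inl a) ↔ r a b := Iff.rfl

@[simp] lemma not_bipartiteOfRel_adj_inl_inl {a a' : α} :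
    ¬ (bipartiteOfRel r).Adj (inl a) (inl a') := id

@[simp] lemma not_bipartiteOfRel_adj_inr_inr {b b' : β} :
    ¬ (bipartiteOfRel r).Adj (inr b) (inr b') := id

lemma bipartiteOfRel_adj_inl_iff {a : α} {v : α ⊕ β} :
    (bipartiteOfRel r).Adj (inl a) v ↔ ∃ b, v = inr b ∧ r a b := by
  cases v <;> simp

lemma bipartiteOfRel_adj_inr_iff {b : β} {v : α ⊕ β} :
    (bipartiteOfRel r).Adj (inr b) v ↔ ∃ a, v = inl a ∧ r a b := by
  cases v <;> simp

variable (r) in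
def bipartiteOfRelFlipIso : bipartiteOfRel r ≃g bipartiteOfRel (flip r) where
  toEquiv := Equiv.sumComm α β
  map_rel_iff' := by rintro (a | b) (a' | b') <;> rfl

lemma nonempty_completeBipartiteGraph_one_three_embedding {b : β} {a₁ a₂ a₃ : α}
    (h₁₂ : a₁ ≠ a₂) (h₁₃ : a₁ ≠ a₃) (h₂₃ : a₂ ≠ a₃) (h₁ : r a₁ b) (h₂ : r a₂ b) (h₃ : r a₃ b) :
    Nonempty (completeBipartiteGraph (Fin 1) (Fin 3) ↪g bipartiteOfRel r) := by
  let v : Fin 1 ⊕ Fin 3 → α ⊕ β := Sum.elim (fun _ => inr b) ![inl a₁, inl a₂, inl a₃]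
  have hinj : v.Injective := by
    rintro (i | i) (j | j) h
    · simp [Subsingleton.elim i j]
    all_goals fin_cases i <;> (try fin_cases j) <;> simp_all [v]
  have hadj : ∀ i j, (bipartiteOfRel r).Adj (v i) (v j) ↔
      (completeBipartiteGraph (Fin 1) (Fin 3)).Adj i j := by
    rintro (i | i) (j | j) <;> (try fin_cases i) <;> (try fin_cases j) <;> simp [v, *]
  exact ⟨⟨⟨v, hinj⟩, hadj _ _⟩⟩

lemma nonempty_cycleGraph_six_embedding {a b c : α} {x y z : β}
    (hab : a ≠ b) (hbc : b ≠ c) (hac : a ≠ c)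
    (hax : r a x) (hbx : r b x) (hby : r b y) (hcy : r c y) (hcz : r c z) (haz : r a z)
    (hcx : ¬ r c x) (hay : ¬ r a y) (hbz : ¬ r b z) :
    Nonempty (cycleGraph 6 ↪g bipartiteOfRel r) := by
  have hxy : x ≠ y := by rintro rfl; exact hcx hcy
  have hyz : y ≠ z := by rintro rfl; exact hay haz
  have hxz : x ≠ z := by rintro rfl; exact hbz hbx
  let v : Fin 6 → α ⊕ β := ![inl a, inr x, inl b, inr y, inl c, inr z]
  have hinj : v.Injective := by
    intro i j h
    fin_cases i <;> fin_cases j <;> simp_all [v]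
  have hadj : ∀ i j, (bipartiteOfRel r).Adj (v i) (v j) ↔ (cycleGraph 6).Adj i j := by
    intro i j
    fin_cases i <;> fin_cases j <;> simp [v, *] <;> decide
  exact ⟨⟨⟨v, hinj⟩, hadj _ _⟩⟩

lemma nonempty_embedding_of_hasTriangle (h : (sharedNeighborGraph r).HasTriangle) :
    Nonempty (cycleGraph 6 ↪g bipartiteOfRel r) ∨
      Nonempty (completeBipartiteGraph (Fin 1) (Fin 3) ↪g bipartiteOfRel r) := by
  obtain ⟨a, b, c, ⟨hab, x, hax, hbx⟩, ⟨hbc, y, hby, hcy⟩, ⟨hac, z, haz, hcz⟩⟩ := h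
  by_cases hcx : r c x
  · exact .inr (nonempty_completeBipartiteGraph_one_three_embedding hab hac hbc hax hbx hcx)
  by_cases hay : r a y
  · exact .inr (nonempty_completeBipartiteGraph_one_three_embedding hab hac hbc hay hby hcy)
  by_cases hbz : r b z
  · exact .inr (nonempty_completeBipartiteGraph_one_three_embedding hab hac hbc haz hbz hcz)
  exact .inl (nonempty_cycleGraph_six_embedding hab hbc hac hax hbx hby hcy hcz haz hcx hay hbz)

lemma hasTriangle_of_cycleGraph_six_embedding (f : cycleGraph 6 ↪g bipartiteOfRel r) {a : α}
    (h0 : f 0 = inl a) : (sharedNeighborGraph r).HasTriangle := by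
  have adj (i j : Fin 6) (h : (cycleGraph 6).Adj i j := by decide) :
      (bipartiteOfRel r).Adj (f i) (f j) := f.map_adj_iff.2 h
  obtain ⟨x, h1, hax⟩ := bipartiteOfRel_adj_inl_iff.1 (h0 ▸ adj 0 1)
  obtain ⟨b, h2, hbx⟩ := bipartiteOfRel_adj_inr_iff.1 (h1 ▸ adj 1 2)
  obtain ⟨y, h3, hby⟩ := bipartiteOfRel_adj_inl_iff.1 (h2 ▸ adj 2 3)
  obtain ⟨c, h4, hcy⟩ := bipartiteOfRel_adj_inr_iff.1 (h3 ▸ adj 3 4)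
  obtain ⟨z, h5, hcz⟩ := bipartiteOfRel_adj_inl_iff.1 (h4 ▸ adj 4 5)
  have haz : r a z := by simpa [h5, h0] using adj 5 0
  have hne (i j : Fin 6) (hij : i ≠ j := by decide) : f i ≠ f j := f.injective.ne hij
  refine ⟨a, b, c, ⟨?_, x, hax, hbx⟩, ⟨?_, y, hby, hcy⟩, ⟨?_, z, haz, hcz⟩⟩
  · simpa [h0, h2] using hne 0 2
  · simpa [h2, h4] using hne 2 4
  · simpa [h0, h4] using hne 0 4

lemma hasTriangle_of_completeBipartiteGraph_one_three_embedding
    (g : completeBipartiteGraph (Fin 1) (Fin 3) ↪g bipartiteOfRel r) {b : β}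
    (h0 : g (inl 0) = inr b) : (sharedNeighborGraph r).HasTriangle := by
  have leaf (i : Fin 3) : ∃ a, g (inr i) = inl a ∧ r a b :=
    bipartiteOfRel_adj_inr_iff.1 (h0 ▸ g.map_adj_iff.2 (by simp))
  choose a ha hab using leaf
  have hinj : a.Injective := fun i j h =>
    inr_injective (g.injective ((ha i).trans (h ▸ (ha j).symm)))
  exact ⟨a 0, a 1, a 2, ⟨hinj.ne (by decide), b, hab 0, hab 1⟩,
    ⟨hinj.ne (by decide), b, hab 1, hab 2⟩, ⟨hinj.ne (by decide), b, hab 0, hab 2⟩⟩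

theorem hasTriangle_or_hasTriangle_flip_iff :
    ((sharedNeighborGraph r).HasTriangle ∨ (sharedNeighborGraph (flip r)).HasTriangle) ↔
      (Nonempty (cycleGraph 6 ↪g bipartiteOfRel r) ∨
        Nonempty (completeBipartiteGraph (Fin 1) (Fin 3) ↪g bipartiteOfRel r)) := by
  have unflip := (bipartiteOfRelFlipIso (flip r)).toEmbedding
  constructor
  · rintro (h | h)
    · exact nonempty_embedding_of_hasTriangle h
    · exact (nonempty_embedding_of_hasTriangle h).imp
        (Nonempty.map unflip.comp) (Nonempty.map unflip.comp)
  · rintro (hf | hg)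
    · obtain ⟨f⟩ := hf
      rcases h0 : f 0 with a | b
      · exact .inl (hasTriangle_of_cycleGraph_six_embedding f h0)
      · exact .inr (hasTriangle_of_cycleGraph_six_embedding
          ((bipartiteOfRelFlipIso r).toEmbedding.comp f) (a := b)
          (by simp [h0, bipartiteOfRelFlipIso]))
    · obtain ⟨g⟩ := hg
      rcases h0 : g (inl 0) with a | b
      · exact .inr (hasTriangle_of_completeBipartiteGraph_one_three_embedding
          ((bipartiteOfRelFlipIso r).toEmbedding.comp g) (b := a)
          (by simp [h0, bipartiteOfRelFlipIso]))
      · exact .inl (hasTriangle_of_completeBipartiteGraph_one_three_embedding g h0)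

end SimpleGraph

lemma Nat.one_lt_gcd_iff_exists_prime {m n : ℕ} (h : m ≠ 0 ∨ n ≠ 0) :
    1 < m.gcd n ↔ ∃ p, p.Prime ∧ p ∣ m ∧ p ∣ n := by
  have : m.gcd n ≠ 0 := by rwa [Ne, Nat.gcd_eq_zero_iff, not_and_or]
  rw [← Nat.Prime.not_coprime_iff_dvd, Nat.Coprime]
  omega

lemma Nat.Prime.mul_dvd_of_dvd_of_ne {p q n : ℕ} (hp : p.Prime) (hq : q.Prime) (hpq : p ≠ q)
    (hpn : p ∣ n) (hqn : q ∣ n) : p * q ∣ n :=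
  ((Nat.coprime_primes hp hq).2 hpq).mul_dvd_of_dvd_of_dvd hpn hqn

section DivisorGraphs

open SimpleGraph

variable (X : Set ℕ)

abbrev primeDvd (p : rho X) (x : Xstar X) : Prop := (p : ℕ) ∣ x

lemma BGraph_eq_bipartiteOfRel : BGraph X = bipartiteOfRel (primeDvd X) := by
  ext (p | x) (q | y) <;> rfl

lemma DeltaGraph_eq_sharedNeighborGraph : DeltaGraph X = sharedNeighborGraph (primeDvd X) := by
  ext p q
  refine and_congr_right fun hpq => ⟨fun ⟨x, hx, hpqx⟩ => ?_, fun ⟨x, hpx, hqx⟩ => ?_⟩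
  · have hpx : (p : ℕ) ∣ x := (dvd_mul_right _ _).trans hpqx
    exact ⟨⟨x, hx, fun h => p.2.1.ne_one (Nat.dvd_one.1 (h ▸ hpx))⟩, hpx,
      (dvd_mul_left _ _).trans hpqx⟩
  · exact ⟨x, x.2.1, p.2.1.mul_dvd_of_dvd_of_ne q.2.1 (Subtype.coe_ne_coe.2 hpq) hpx hqx⟩

lemma GammaGraph_eq_sharedNeighborGraph :
    GammaGraph X = sharedNeighborGraph (flip (primeDvd X)) := by
  ext x y
  refine and_congr_right fun hxy => ?_
  rw [Nat.one_lt_gcd_iff_exists_prime (by have := Subtype.coe_ne_coe.2 hxy; omega)]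
  exact ⟨fun ⟨p, hp, hpx, hpy⟩ => ⟨⟨p, hp, x, x.2.1, hpx⟩, hpx, hpy⟩,
    fun ⟨p, hpx, hpy⟩ => ⟨p, p.2.1, hpx, hpy⟩⟩

end DivisorGraphs

theorem stmt_9_general (X : Set ℕ) :
    ((∃ p q r : ↥(rho X),
        (DeltaGraph X).Adj p q ∧ (DeltaGraph X).Adj q r ∧ (DeltaGraph X).Adj p r) ∨
     (∃ x y z : ↥(Xstar X),
        (GammaGraph X).Adj x y ∧ (GammaGraph X).Adj y z ∧ (GammaGraph X).Adj x z)) ↔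
    (Nonempty (SimpleGraph.cycleGraph 6 ↪g BGraph X) ∨
     Nonempty (completeBipartiteGraph (Fin 1) (Fin 3) ↪g BGraph X)) := by
  rw [DeltaGraph_eq_sharedNeighborGraph, GammaGraph_eq_sharedNeighborGraph,
    BGraph_eq_bipartiteOfRel]
  exact hasTriangle_or_hasTriangle_flip_iff

theorem stmt_9 (X : Set ℕ) (hne : X.Nonempty) (hpos : ∀ x ∈ X, 0 < x)
    (hX1 : X ≠ {1}) :
    ((∃ p q r : ↥(rho X),
        (DeltaGraph X).Adj p q ∧ (DeltaGraph X).Adj q r ∧ (DeltaGraph X).Adj p r) ∨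
     (∃ x y z : ↥(Xstar X),
        (GammaGraph X).Adj x y ∧ (GammaGraph X).Adj y z ∧ (GammaGraph X).Adj x z)) ↔
    (Nonempty (SimpleGraph.cycleGraph 6 ↪g BGraph X) ∨
     Nonempty (completeBipartiteGraph (Fin 1) (Fin 3) ↪g BGraph X)) :=
  stmt_9_general X
end
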